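/- arXiv:1712.08155 — 3 statements merged into one kernel-verified Lean document; each statement's English description precedes it below -/
import Mathlib

section
/- Fix integers $n \geq 2$ and $m \in \{0,1\}$, and let $\mathfrak{g}$ be the vector space with basis $h_1,\dots,h_n$ equipped with the bracket determined by $[h_i, h_j] = (j-i)\, h_{i+j-(n-m+2)}$ for $2 \leq i < j \leq n$ (with the convention $h_k = 0$ for $k \leq 0$) and $[h_1, h_i] = 0$ for all $i$. Then this bracket satisfies the Jacobi identity, so $\mathfrak{g}$ is a Lie algebra, and moreover $\mathfrak{g}$ is nilpotent. -/
/-- Structure constants of the quasi-Stäckel algebra for `m = 0, 1`: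
`[hᵢ,hⱼ] = (j-i) h_{i+j-(n-m+2)}` for `i,j ≥ 2` (1-based), `[h₁,·] = 0`,
with `h_k = 0` for `k ≤ 0`.  Indices are 0-based, so the basis vector `h_{i+1}`
corresponds to `i : Fin n`; `strC n m i j k` is the coefficient of `h_{k+1}` in
`[h_{i+1}, h_{j+1}]`. -/
def strC (n m : ℕ) (i j k : Fin n) : ℝ :=
  if 1 ≤ i.val ∧ 1 ≤ j.val ∧ k.val + (n - m + 1) = i.val + j.val
  then (j.val : ℝ) - (i.val : ℝ) else 0

/-- The corresponding bilinear bracket on `ℝⁿ` (coordinates w.r.t. the basis `hᵢ`). -/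
def qsBr (n m : ℕ) (x y : Fin n → ℝ) : Fin n → ℝ :=
  fun k => ∑ i, ∑ j, x i * y j * strC n m i j k

lemma strC_skew (n m : ℕ) (i j k : Fin n) : strC n m j i k = -strC n m i j k := by
  unfold strC
  by_cases h : 1 ≤ i.val ∧ 1 ≤ j.val ∧ k.val + (n - m + 1) = i.val + j.val
  · rw [if_pos h,
      if_pos (by omega : 1 ≤ j.val ∧ 1 ≤ i.val ∧ k.val + (n - m + 1) = j.val + i.val)]
    ring
  · rw [if_neg h, if_neg (by omega), neg_zero]

lemma qsBr_skew (n m : ℕ) (x y : Fin n → ℝ) : qsBr n m x y = -qsBr n m y x := by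
  funext k
  show (∑ i, ∑ j, x i * y j * strC n m i j k) = -∑ i, ∑ j, y i * x j * strC n m i j k
  calc (∑ i, ∑ j, x i * y j * strC n m i j k)
      = ∑ i, ∑ j, -(y j * x i * strC n m j i k) := by
        refine Finset.sum_congr rfl fun i _ => Finset.sum_congr rfl fun j _ => ?_
        rw [strC_skew]; ring
    _ = -∑ i, ∑ j, y j * x i * strC n m j i k := by simp [Finset.sum_neg_distrib]
    _ = -∑ j, ∑ i, y j * x i * strC n m j i k := by rw [Finset.sum_comm]

lemma sum_strC (n m : ℕ) (hm : m ≤ 1) (a b i k : Fin n) :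
    ∑ j : Fin n, strC n m a b j * strC n m i j k =
    if 1 ≤ a.val ∧ 1 ≤ b.val ∧ 1 ≤ i.val ∧
        k.val + 2 * (n - m + 1) = i.val + a.val + b.val
    then ((b.val : ℝ) - a.val) * (((k.val : ℝ) + ((n - m + 1 : ℕ) : ℝ)) - 2 * i.val)
    else 0 := by
  have ha := a.isLt; have hb := b.isLt; have hi := i.isLt; have hk := k.isLt
  by_cases hC : 1 ≤ a.val ∧ 1 ≤ b.val ∧ 1 ≤ i.val ∧
      k.val + 2 * (n - m + 1) = i.val + a.val + b.val
  · rw [if_pos hC]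
    have hj0 : a.val + b.val - (n - m + 1) < n := by omega
    rw [Finset.sum_eq_single (⟨a.val + b.val - (n - m + 1), hj0⟩ : Fin n)]
    · unfold strC
      rw [if_pos (by simp only []; omega), if_pos (by simp only []; omega)]
      have hnat : k.val + (n - m + 1) = i.val + (a.val + b.val - (n - m + 1)) := by omega
      have hcast : ((k.val + (n - m + 1) : ℕ) : ℝ)
          = ((i.val + (a.val + b.val - (n - m + 1)) : ℕ) : ℝ) := by rw [hnat]
      push_cast at hcast
      push_cast
      rw [show ((a.val + b.val - (n - m + 1) : ℕ) : ℝ)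
          = (k.val : ℝ) + ((n - m : ℕ) : ℝ) + 1 - i.val by linarith]
      ring
    · intro j _ hne
      unfold strC
      split_ifs with h1 h2 <;> try simp
      exfalso
      exact hne (Fin.ext (show j.val = a.val + b.val - (n - m + 1) by omega))
    · intro h; exact absurd (Finset.mem_univ _) h
  · rw [if_neg hC]
    refine Finset.sum_eq_zero fun j _ => ?_
    unfold strC
    split_ifs with h1 h2 <;> try simp
    exact absurd (by omega : 1 ≤ a.val ∧ 1 ≤ b.val ∧ 1 ≤ i.val ∧
        k.val + 2 * (n - m + 1) = i.val + a.val + b.val) hC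

lemma qsBr_expand (n m : ℕ) (x y z : Fin n → ℝ) (k : Fin n) :
    qsBr n m x (qsBr n m y z) k
    = ∑ p, ∑ q, ∑ r, x p * y q * z r * ∑ j, strC n m q r j * strC n m p j k := by
  unfold qsBr
  simp only [Finset.sum_mul, Finset.mul_sum]
  refine Finset.sum_congr rfl fun p _ => ?_
  rw [Finset.sum_comm]
  refine Finset.sum_congr rfl fun q _ => ?_
  rw [Finset.sum_comm]
  refine Finset.sum_congr rfl fun r _ => ?_
  refine Finset.sum_congr rfl fun j _ => ?_
  ring

lemma rot3 (n : ℕ) (f : Fin n → Fin n → Fin n → ℝ) :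
    (∑ p, ∑ q, ∑ r, f p q r) = ∑ p, ∑ q, ∑ r, f q r p := by
  have h : (∑ p, ∑ q, ∑ r, f q r p) = ∑ q, ∑ p, ∑ r, f q r p := Finset.sum_comm
  rw [h]
  exact Finset.sum_congr rfl fun t _ => Finset.sum_comm

/-- for `n ≥ 2` and `m ∈ {0,1}` the bracket determined by
`[hᵢ,hⱼ] = (j-i) h_{i+j-(n-m+2)}` (with `h_k = 0` for `k ≤ 0`) and `[h₁,·] = 0`
satisfies the axioms of a Lie bracket (alternating and Jacobi), so it makes `ℝⁿ` a
Lie algebra, and moreover this Lie algebra is nilpotent: some iterated bracket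
length annihilates everything. -/
theorem stmt9 (n m : ℕ) (hn : 2 ≤ n) (hm : m ≤ 1) :
    (∀ x : Fin n → ℝ, qsBr n m x x = 0) ∧
    (∀ x y : Fin n → ℝ, qsBr n m x y = -qsBr n m y x) ∧
    (∀ x y z : Fin n → ℝ,
      qsBr n m x (qsBr n m y z) + qsBr n m y (qsBr n m z x)
        + qsBr n m z (qsBr n m x y) = 0) ∧
    (∃ N : ℕ, ∀ (x : ℕ → Fin n → ℝ) (y : Fin n → ℝ),
      Nat.rec (motive := fun _ => Fin n → ℝ) y (fun l acc => qsBr n m (x l) acc) N = 0) := by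
  refine ⟨?_, fun x y => qsBr_skew n m x y, ?_, ?_⟩
  · intro x
    funext k
    have h := congrFun (qsBr_skew n m x x) k
    simp only [Pi.neg_apply, Pi.zero_apply] at h ⊢
    linarith
  · intro x y z
    funext k
    simp only [Pi.add_apply, Pi.zero_apply]
    rw [qsBr_expand, qsBr_expand, qsBr_expand]
    have hB : (∑ p, ∑ q, ∑ r, y p * z q * x r * ∑ j, strC n m q r j * strC n m p j k)
        = ∑ p, ∑ q, ∑ r, y q * z r * x p * ∑ j, strC n m r p j * strC n m q j k :=
      rot3 n (fun p q r => y p * z q * x r * ∑ j, strC n m q r j * strC n m p j k)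
    have hC1 : (∑ p, ∑ q, ∑ r, z p * x q * y r * ∑ j, strC n m q r j * strC n m p j k)
        = ∑ p, ∑ q, ∑ r, z q * x r * y p * ∑ j, strC n m r p j * strC n m q j k :=
      rot3 n (fun p q r => z p * x q * y r * ∑ j, strC n m q r j * strC n m p j k)
    have hC2 : (∑ p, ∑ q, ∑ r, z q * x r * y p * ∑ j, strC n m r p j * strC n m q j k)
        = ∑ p, ∑ q, ∑ r, z r * x p * y q * ∑ j, strC n m p q j * strC n m r j k :=
      rot3 n (fun p q r => z q * x r * y p * ∑ j, strC n m r p j * strC n m q j k)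
    rw [hB, hC1, hC2]
    simp only [← Finset.sum_add_distrib]
    refine Finset.sum_eq_zero fun p _ => Finset.sum_eq_zero fun q _ =>
      Finset.sum_eq_zero fun r _ => ?_
    rw [sum_strC n m hm q r p k, sum_strC n m hm r p q k, sum_strC n m hm p q r k]
    by_cases h : 1 ≤ q.val ∧ 1 ≤ r.val ∧ 1 ≤ p.val ∧
        k.val + 2 * (n - m + 1) = p.val + q.val + r.val
    · rw [if_pos h, if_pos (by omega), if_pos (by omega)]; ring
    · rw [if_neg h, if_neg (by omega), if_neg (by omega)]; ring
  · refine ⟨n, fun x y => ?_⟩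
    have key : ∀ l (k : Fin n), n ≤ k.val + l →
        (Nat.rec (motive := fun _ => Fin n → ℝ) y
          (fun l acc => qsBr n m (x l) acc) l) k = 0 := by
      intro l
      induction l with
      | zero => intro k hk; exact absurd hk (by have := k.isLt; omega)
      | succ l ih =>
        intro k hk
        show qsBr n m (x l)
          (Nat.rec (motive := fun _ => Fin n → ℝ) y (fun l acc => qsBr n m (x l) acc) l) k = 0
        refine Finset.sum_eq_zero fun i _ => Finset.sum_eq_zero fun j _ => ?_
        by_cases hs : 1 ≤ i.val ∧ 1 ≤ j.val ∧ k.val + (n - m + 1) = i.val + j.val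
        · have hj : n ≤ j.val + l := by have := i.isLt; omega
          rw [ih j hj]; ring
        · unfold strC; rw [if_neg hs]; ring
    funext k
    exact key n k (by omega)
end

section
/- Fix integers $n \geq 2$ and $m \in \{0,1\}$, and let $\mathfrak{g}$ be the Lie algebra with basis $h_1,\dots,h_n$ and brackets $[h_i,h_j] = (j-i) h_{i+j-(n-m+2)}$ for $i,j \geq 2$ (with $h_k = 0$ for $k \leq 0$), $[h_1,\cdot] = 0$. Then the subspace $\mathrm{span}\{h_1,\dots,h_{d_a}\}$ with $d_a = \lfloor (n+3-m)/2 \rfloor$ is a maximal abelian subalgebra among the subalgebras spanned by initial segments of the basis; i.e., $[h_i,h_j] = 0$ whenever $i,j \leq \lfloor (n+3-m)/2 \rfloor$, and if $d > \lfloor (n+3-m)/2 \rfloor$ then $\mathrm{span}\{h_1,\dots,h_d\}$ is not abelian. -/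
/-!
In 0-based indices the bracket `[h_i, h_j]` is `(j - i) h_k` with `k = i + j - (n - m + 1)`, so it
vanishes when `i = j` or `i + j < n - m + 1`. Two indices below `⌊(n + 3 - m)/2⌋` always fall into
one of these cases. Conversely, once `d` exceeds that bound, `i = n - m + 2 - d < j = d - 1` are
both below `d`, satisfy `i ≥ 1` (as `d ≤ n ≤ n - m + 1`), and `[h_i, h_j] = (j - i) h_0 ≠ 0`.
-/

theorem Module.Basis.sum_smul_eq_zero_iff {ι R M : Type*} [Fintype ι] [Ring R]
    [AddCommGroup M] [Module R M] (B : Module.Basis ι R M) (c : ι → R) :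
    ∑ k, c k • B k = 0 ↔ ∀ k, c k = 0 :=
  ⟨Fintype.linearIndependent_iff.mp B.linearIndependent c,
    fun hc ↦ Finset.sum_eq_zero fun k _ ↦ by rw [hc k, zero_smul]⟩

section strC

variable {n m : ℕ}

theorem strC_self (i k : Fin n) : strC n m i i k = 0 := by
  simp [strC]

theorem strC_eq_zero_of_add_lt {i j : Fin n} (h : i.val + j.val < n - m + 1) (k : Fin n) :
    strC n m i j k = 0 :=
  if_neg (by omega)

theorem strC_ne_zero {i j k : Fin n} (hi : 1 ≤ i.val) (hij : i.val < j.val)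
    (hk : k.val + (n - m + 1) = i.val + j.val) : strC n m i j k ≠ 0 := by
  rw [strC, if_pos ⟨hi, by omega, hk⟩, sub_ne_zero, Nat.cast_inj.ne]
  exact hij.ne'

end strC

theorem stmt10_general {L : Type*} [LieRing L] [LieAlgebra ℝ L]
    (n m : ℕ) (hm : m ≤ 1)
    (B : Module.Basis (Fin n) ℝ L)
    (hbr : ∀ i j : Fin n, ⁅B i, B j⁆ = ∑ k, strC n m i j k • B k) :
    (∀ i j : Fin n, i.val < (n + 3 - m) / 2 → j.val < (n + 3 - m) / 2 →
      ⁅B i, B j⁆ = 0) ∧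
    (∀ d : ℕ, (n + 3 - m) / 2 < d → d ≤ n →
      ∃ i j : Fin n, i.val < d ∧ j.val < d ∧ ⁅B i, B j⁆ ≠ 0) := by
  refine ⟨fun i j hi hj ↦ ?_, fun d hd hdn ↦ ?_⟩
  · rw [hbr, B.sum_smul_eq_zero_iff]
    obtain rfl | hij := eq_or_ne i j
    · exact strC_self i
    · exact strC_eq_zero_of_add_lt (by omega)
  · refine ⟨⟨n - m + 2 - d, by omega⟩, ⟨d - 1, by omega⟩, by simp only; omega,
      by simp only; omega, ?_⟩
    rw [hbr, Ne, B.sum_smul_eq_zero_iff, not_forall]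
    exact ⟨⟨0, by omega⟩, strC_ne_zero (by simp only; omega) (by simp only; omega)
      (by simp only; omega)⟩

/-- in the quasi-Stäckel Lie algebra for `m ∈ {0,1}`, the span of
`h₁,…,h_{d_a}` with `d_a = ⌊(n+3-m)/2⌋` is abelian, and it is maximal among abelian
subalgebras spanned by initial segments of the basis: for any `d > d_a` the span of
`h₁,…,h_d` is not abelian. -/
theorem stmt10 {L : Type*} [LieRing L] [LieAlgebra ℝ L]
    (n m : ℕ) (hn : 2 ≤ n) (hm : m ≤ 1)
    (B : Module.Basis (Fin n) ℝ L)
    (hbr : ∀ i j : Fin n, ⁅B i, B j⁆ = ∑ k, strC n m i j k • B k) :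
    (∀ i j : Fin n, i.val < (n + 3 - m) / 2 → j.val < (n + 3 - m) / 2 →
      ⁅B i, B j⁆ = 0) ∧
    (∀ d : ℕ, (n + 3 - m) / 2 < d → d ≤ n →
      ∃ i j : Fin n, i.val < d ∧ j.val < d ∧ ⁅B i, B j⁆ ≠ 0) :=
  stmt10_general n m hm B hbr
end

section
/- Fix an integer $n \geq 2$ and $m \in \{n, n+1\}$, and let $\mathfrak{g}$ be the vector space with basis $h_1,\dots,h_n$ equipped with the bracket $[h_1,\cdot]=0$ and, for $2 \leq i,j \leq n$, $[h_i,h_j] = -(j-i)\, h_{i+j-(n-m+2)}$ (with $h_k = 0$ for $k \leq 0$ or $k > n$). Then this bracket satisfies the Jacobi identity; moreover, for $m = n+1$ the Lie algebra $\mathfrak{g}$ is nilpotent, while for $m = n$ the subalgebra $\mathrm{span}\{h_1,\dots,h_{n-1}\}$ (in the reordered basis $h_1' = h_1$, $h_i' = h_{n-i+2}$) is nilpotent of codimension one in $\mathfrak{g}$. -/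
/-- Structure constants of the quasi-Stäckel algebra for `m ∈ {n, n+1}` (0-based
indices): `strC2 n m i j k` is the coefficient of `h_{k+1}` in `[h_{i+1}, h_{j+1}]`,
encoding `[hᵢ,hⱼ] = -(j-i) h_{i+j-(n-m+2)}` for `i,j ≥ 2`, `[h₁,·] = 0`, with
`h_k = 0` for `k ≤ 0` or `k > n` (the index shift is computed in `ℤ`). -/
def strC2 (n m : ℕ) (i j k : Fin n) : ℝ :=
  if 1 ≤ i.val ∧ 1 ≤ j.val ∧
      ((k.val : ℤ) + 1 = ((i.val : ℤ) + 1) + ((j.val : ℤ) + 1) - ((n : ℤ) - (m : ℤ) + 2))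
  then -((j.val : ℝ) - (i.val : ℝ)) else 0

/-- The corresponding bilinear bracket on `ℝⁿ` (coordinates w.r.t. the basis `hᵢ`). -/
def qsBr2 (n m : ℕ) (x y : Fin n → ℝ) : Fin n → ℝ :=
  fun k => ∑ i, ∑ j, x i * y j * strC2 n m i j k

/-! The structure constants are `c i j k = i - j`, supported on `i, j ≥ 1`,
`i + j + m = k + n + 1` (0-based indices): a truncated Witt algebra. In `∑ⱼ c p q j * c i j k`
only `j = p + q + m - n - 1` survives, and it is `≥ 1` because `n ≤ m`; so the sum is
`(p - q)(i - p - q + const)` on the support `p + q + i + 2m = k + 2n + 2`, which is symmetric in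
`p, q, i`, and its cyclic sum vanishes. For nilpotency, `[x, ·]` strictly raises the index since
`i ≥ 1` when `m = n + 1`; when `m = n` this takes `i ≥ 2`, i.e. `x` in the hyperplane of vanishing
`h₂`-coordinate, and that coordinate of any bracket is the coefficient of `[h₂, h₂] = 0`. -/

open Finset

section StructureConstants

variable {ι R : Type*} [Fintype ι] [CommRing R] (c : ι → ι → ι → R)

def scBracket (x y : ι → R) : ι → R :=
  fun k => ∑ i, ∑ j, x i * y j * c i j k

theorem scBracket_swap (hc : ∀ i j k, c i j k = -c j i k) (x y : ι → R) :
    scBracket c x y = -scBracket c y x := by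
  funext k
  simp only [scBracket, Pi.neg_apply, ← sum_neg_distrib]
  rw [sum_comm]
  refine sum_congr rfl fun i _ => sum_congr rfl fun j _ => ?_
  rw [hc]
  ring

theorem scBracket_self [IsAddTorsionFree R] (hc : ∀ i j k, c i j k = -c j i k) (x : ι → R) :
    scBracket c x x = 0 :=
  self_eq_neg.mp (scBracket_swap c hc x x)

theorem scBracket_scBracket_apply (x y z : ι → R) (k : ι) :
    scBracket c x (scBracket c y z) k =
      ∑ i, ∑ p, ∑ q, x i * y p * z q * ∑ j, c p q j * c i j k := by
  simp only [scBracket, sum_mul, mul_sum]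
  refine sum_congr rfl fun i _ => ?_
  rw [sum_comm]
  refine sum_congr rfl fun p _ => ?_
  rw [sum_comm]
  refine sum_congr rfl fun q _ => sum_congr rfl fun j _ => ?_
  ring

theorem sum_sum_sum_rotate {M : Type*} [AddCommMonoid M] (f : ι → ι → ι → M) :
    ∑ a, ∑ b, ∑ c, f a b c = ∑ c, ∑ a, ∑ b, f a b c := by
  calc ∑ a, ∑ b, ∑ c, f a b c = ∑ a, ∑ c, ∑ b, f a b c := sum_congr rfl fun _ _ => sum_comm
    _ = ∑ c, ∑ a, ∑ b, f a b c := sum_comm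

theorem scBracket_jacobi
    (hc : ∀ p q i k, (∑ j, c p q j * c i j k) + (∑ j, c q i j * c p j k)
      + (∑ j, c i p j * c q j k) = 0)
    (x y z : ι → R) :
    scBracket c x (scBracket c y z) + scBracket c y (scBracket c z x)
      + scBracket c z (scBracket c x y) = 0 := by
  funext k
  simp only [Pi.add_apply, Pi.zero_apply, scBracket_scBracket_apply]
  rw [sum_sum_sum_rotate (fun i p q => y i * z p * x q * ∑ j, c p q j * c i j k),
    ← sum_sum_sum_rotate (fun p q i => z i * x p * y q * ∑ j, c p q j * c i j k)]
  simp only [← sum_add_distrib]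
  refine sum_eq_zero fun a _ => sum_eq_zero fun b _ => sum_eq_zero fun d _ => ?_
  linear_combination (x a * y b * z d) * hc b d a k

end StructureConstants

section Filtration

variable {R : Type*} [Zero R] {n : ℕ}

def VanishesBelow (t : ℕ) (y : Fin n → R) : Prop :=
  ∀ j : Fin n, j.val < t → y j = 0

theorem VanishesBelow.eq_zero {y : Fin n → R} (hy : VanishesBelow n y) : y = 0 :=
  funext fun j => hy j j.isLt

theorem vanishesBelow_natRec (f : ℕ → (Fin n → R) → Fin n → R)
    (hf : ∀ l t y, VanishesBelow t y → VanishesBelow (t + 1) (f l y)) (y : Fin n → R) (N : ℕ) :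
    VanishesBelow N (Nat.rec (motive := fun _ => Fin n → R) y (fun l acc => f l acc) N) := by
  induction N with
  | zero => exact fun j hj => absurd hj (Nat.not_lt_zero _)
  | succ N ih => exact hf N N _ ih

end Filtration

theorem scBracket_vanishesBelow {R : Type*} [CommRing R] {n : ℕ} (c : Fin n → Fin n → Fin n → R)
    {x y : Fin n → R} {t : ℕ} (hc : ∀ i j k, x i ≠ 0 → c i j k ≠ 0 → j.val < k.val)
    (hy : VanishesBelow t y) : VanishesBelow (t + 1) (scBracket c x y) := by
  intro k hk
  refine sum_eq_zero fun i _ => sum_eq_zero fun j _ => ?_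
  by_cases hx : x i = 0
  · simp [hx]
  by_cases hcij : c i j k = 0
  · simp [hcij]
  have hj := hc i j k hx hcij
  simp [hy j (by omega)]

theorem finrank_ker_proj {K ι : Type*} [Field K] [Fintype ι] (i : ι) :
    Module.finrank K (LinearMap.ker (LinearMap.proj (R := K) (φ := fun _ : ι => K) i))
      = Fintype.card ι - 1 := by
  have hsurj : Function.Surjective (LinearMap.proj (R := K) (φ := fun _ : ι => K) i) :=
    fun r => ⟨fun _ => r, rfl⟩
  have h := LinearMap.finrank_range_add_finrank_ker
    (LinearMap.proj (R := K) (φ := fun _ : ι => K) i)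
  rw [LinearMap.range_eq_top.mpr hsurj, finrank_top, Module.finrank_self,
    Module.finrank_fintype_fun_eq_card] at h
  omega

section QuasiStaeckel

variable {n m : ℕ}

theorem strC2_eq_ite (i j k : Fin n) :
    strC2 n m i j k =
      if 1 ≤ i.val ∧ 1 ≤ j.val ∧ i.val + j.val + m = k.val + n + 1
      then (i : ℝ) - j else 0 := by
  unfold strC2
  split_ifs <;> first | ring1 | (exfalso; omega)

theorem strC2_swap (i j k : Fin n) : strC2 n m i j k = -strC2 n m j i k := by
  simp only [strC2_eq_ite]
  split_ifs <;> first | ring1 | (exfalso; omega)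

theorem strC2_support {i j k : Fin n} (h : strC2 n m i j k ≠ 0) :
    1 ≤ i.val ∧ 1 ≤ j.val ∧ i.val + j.val + m = k.val + n + 1 := by
  rw [strC2_eq_ite] at h
  by_contra hcond
  exact h (if_neg hcond)

theorem sum_strC2_mul_strC2 (hnm : n ≤ m) (p q i k : Fin n) :
    ∑ j, strC2 n m p q j * strC2 n m i j k =
      if 1 ≤ p.val ∧ 1 ≤ q.val ∧ 1 ≤ i.val ∧ p.val + q.val + i.val + 2 * m = k.val + 2 * n + 2
      then ((p : ℝ) - q) * (i + n + 1 - p - q - m) else 0 := by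
  simp only [strC2_eq_ite]
  split_ifs with h
  · let j₀ : Fin n := ⟨p.val + q.val + m - n - 1, by omega⟩
    have hj₀ : (j₀ : ℝ) = p + q + m - n - 1 := by
      rw [Nat.cast_sub (by omega), Nat.cast_sub (by omega)]
      push_cast
      ring
    rw [sum_eq_single j₀]
    · rw [if_pos (by simp only [j₀]; omega), if_pos (by simp only [j₀]; omega), hj₀]
      ring
    · intro j _ hj
      split_ifs <;> first | ring1 | exact absurd (Fin.ext (by simp only [j₀]; omega)) hj
    · exact fun h => (h (mem_univ _)).elim
  · refine sum_eq_zero fun j _ => ?_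
    split_ifs <;> first | ring1 | (exfalso; omega)

theorem strC2_jacobi (hnm : n ≤ m) (p q i k : Fin n) :
    (∑ j, strC2 n m p q j * strC2 n m i j k) + (∑ j, strC2 n m q i j * strC2 n m p j k)
      + (∑ j, strC2 n m i p j * strC2 n m q j k) = 0 := by
  simp only [sum_strC2_mul_strC2 hnm]
  by_cases h : 1 ≤ p.val ∧ 1 ≤ q.val ∧ 1 ≤ i.val ∧
      p.val + q.val + i.val + 2 * m = k.val + 2 * n + 2
  · rw [if_pos h, if_pos (by omega), if_pos (by omega)]
    ring
  · rw [if_neg h, if_neg (by omega), if_neg (by omega)]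
    ring

theorem qsBr2_succ_vanishesBelow (x : Fin n → ℝ) {y : Fin n → ℝ} {t : ℕ}
    (hy : VanishesBelow t y) : VanishesBelow (t + 1) (qsBr2 n (n + 1) x y) :=
  scBracket_vanishesBelow _ (fun _ _ _ _ h => by have := strC2_support h; omega) hy

theorem qsBr2_self_vanishesBelow (hn : 1 < n) {x y : Fin n → ℝ} {t : ℕ} (hx : x ⟨1, hn⟩ = 0)
    (hy : VanishesBelow t y) : VanishesBelow (t + 1) (qsBr2 n n x y) := by
  refine scBracket_vanishesBelow _ (fun i j k hxi h => ?_) hy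
  have hi : i.val ≠ 1 := fun hi => hxi (by rwa [show i = ⟨1, hn⟩ from Fin.ext hi])
  have := strC2_support h
  omega

theorem strC2_self_apply_one (hn : 1 < n) (i j : Fin n) : strC2 n n i j ⟨1, hn⟩ = 0 := by
  rw [strC2_eq_ite]
  split_ifs with h
  · rw [show i = j from Fin.ext (by simp only at h; omega), sub_self]
  · rfl

theorem qsBr2_self_apply_one (hn : 1 < n) (x y : Fin n → ℝ) : qsBr2 n n x y ⟨1, hn⟩ = 0 :=
  sum_eq_zero fun i _ => sum_eq_zero fun j _ => by rw [strC2_self_apply_one, mul_zero]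

end QuasiStaeckel

/-- for `m ∈ {n, n+1}` the bracket `[hᵢ,hⱼ] = -(j-i) h_{i+j-(n-m+2)}`,
`[h₁,·]=0`, satisfies the Jacobi identity (and is alternating), so it makes `ℝⁿ` a Lie
algebra; for `m = n+1` this Lie algebra is nilpotent, while for `m = n` the span of
`h₁,h₃,h₄,…,hₙ` (the reordered basis `h₁' = h₁`, `hᵢ' = h_{n-i+2}`, `i ≤ n-1`), i.e.
the hyperplane of vectors with vanishing `h₂`-coordinate, is a nilpotent subalgebra of
codimension one. -/
theorem stmt15 (n m : ℕ) (hn : 2 ≤ n) (hm : m = n ∨ m = n + 1) :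
    (∀ x : Fin n → ℝ, qsBr2 n m x x = 0) ∧
    (∀ x y : Fin n → ℝ, qsBr2 n m x y = -qsBr2 n m y x) ∧
    (∀ x y z : Fin n → ℝ,
      qsBr2 n m x (qsBr2 n m y z) + qsBr2 n m y (qsBr2 n m z x)
        + qsBr2 n m z (qsBr2 n m x y) = 0) ∧
    (m = n + 1 → ∃ N : ℕ, ∀ (x : ℕ → Fin n → ℝ) (y : Fin n → ℝ),
      Nat.rec (motive := fun _ => Fin n → ℝ) y (fun l acc => qsBr2 n m (x l) acc) N = 0) ∧
    (m = n →
      -- the hyperplane {x | x₂-coordinate = 0} is closed under the bracket …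
      (∀ x y : Fin n → ℝ, x ⟨1, by omega⟩ = 0 → y ⟨1, by omega⟩ = 0 →
        qsBr2 n m x y ⟨1, by omega⟩ = 0) ∧
      -- … is nilpotent …
      (∃ N : ℕ, ∀ (x : ℕ → Fin n → ℝ), (∀ l, x l ⟨1, by omega⟩ = 0) →
        ∀ y : Fin n → ℝ, y ⟨1, by omega⟩ = 0 →
        Nat.rec (motive := fun _ => Fin n → ℝ) y (fun l acc => qsBr2 n m (x l) acc) N = 0) ∧
      -- … and has codimension one
      Module.finrank ℝ
        (LinearMap.ker (LinearMap.proj (R := ℝ) (φ := fun _ : Fin n => ℝ) ⟨1, by omega⟩))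
        = n - 1) := by
  have hnm : n ≤ m := by omega
  refine ⟨scBracket_self _ strC2_swap, scBracket_swap _ strC2_swap,
    scBracket_jacobi _ (strC2_jacobi hnm), ?_, ?_⟩
  · rintro rfl
    exact ⟨n, fun x y => (vanishesBelow_natRec _
      (fun l _ _ hy => qsBr2_succ_vanishesBelow (x l) hy) y n).eq_zero⟩
  · rintro rfl
    refine ⟨fun x y _ _ => qsBr2_self_apply_one _ x y, ⟨m, fun x hx y _ => ?_⟩,
      by simpa using finrank_ker_proj (K := ℝ) (⟨1, by omega⟩ : Fin m)⟩
    exact (vanishesBelow_natRec _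
      (fun l _ _ hy => qsBr2_self_vanishesBelow (by omega) (hx l) hy) y m).eq_zero
end
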